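/- Let (Ω, F, P) be a probability space and let X₁, …, X_{n+1} : Ω → ℝ be independent and identically distributed real-valued random variables (ties allowed). Then for every k ∈ {1, …, n+1}, P(#{i ∈ {1,…,n+1} : Xᵢ < X_{n+1}} ≤ k − 1) ≥ k/(n+1). -/

import Mathlib

open MeasureTheory ProbabilityTheory Finset

/-! In any sample of size `m`, for `k ≤ m`, at least `k` indices have strict rank `< k`: otherwise
an index of minimal value outside that set would have all strictly smaller values inside it, so
its own rank would be `< k`. Since the sample is i.i.d., it is exchangeable, so every index has
the same probability `p` of strict rank `< k`; summing over the indices gives `k ≤ m p`. -/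

section StrictRank

variable {ι α : Type*} [Fintype ι] [Preorder α] [DecidableLT α]

def strictRank (x : ι → α) (j : ι) : ℕ := #{i | x i < x j}

lemma strictRank_comp_perm (x : ι → α) (σ : Equiv.Perm ι) (j : ι) :
    strictRank (x ∘ σ) j = strictRank x (σ j) :=
  card_equiv σ (by simp)

lemma le_card_filter_strictRank_lt (x : ι → α) {k : ℕ} (hk : k ≤ Fintype.card ι) :
    k ≤ #{j | strictRank x j < k} := by
  classical
  set S : Finset ι := {j | strictRank x j < k}
  by_contra! hS
  have hne : Sᶜ.Nonempty := by
    rw [← card_pos, card_compl]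
    omega
  obtain ⟨j, hjS, hj_min⟩ := Sᶜ.exists_minimalFor x hne
  have hsub : ({i | x i < x j} : Finset ι) ⊆ S := by
    intro i hi
    by_contra hiS
    have hlt : x i < x j := (mem_filter.mp hi).2
    exact hlt.not_ge (hj_min (mem_compl.mpr hiS) hlt.le)
  exact mem_compl.mp hjS (mem_filter.mpr ⟨mem_univ j, (card_le_card hsub).trans_lt hS⟩)

end StrictRank

lemma natCast_mul_measure_univ_le_sum_measure {ι Ω : Type*} [Fintype ι] [MeasurableSpace Ω]
    (μ : Measure Ω) {A : ι → Set Ω} [∀ j, DecidablePred (· ∈ A j)]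
    (hA : ∀ j, NullMeasurableSet (A j) μ) {k : ℕ} (hk : ∀ ω, k ≤ #{j | ω ∈ A j}) :
    k * μ Set.univ ≤ ∑ j, μ (A j) :=
  calc k * μ Set.univ = ∫⁻ _, (k : ENNReal) ∂μ := (lintegral_const _).symm
    _ ≤ ∫⁻ ω, ∑ j, (A j).indicator 1 ω ∂μ := lintegral_mono fun ω ↦ by
        simpa [Set.indicator_apply, sum_boole] using hk ω
    _ = ∑ j, μ (A j) := by
        rw [lintegral_finsetSum' (f := fun j ↦ (A j).indicator 1) _
          fun j _ ↦ aemeasurable_one.indicator₀ (hA j)]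
        simp_rw [lintegral_indicator_one₀ (hA _)]

theorem ProbabilityTheory.iIndepFun.identDistrib_comp_perm {ι Ω β : Type*} [Fintype ι]
    [MeasurableSpace Ω] [MeasurableSpace β] {P : Measure Ω} {X : ι → Ω → β}
    (hindep : iIndepFun X P) (hid : ∀ i j, IdentDistrib (X i) (X j) P P) (σ : Equiv.Perm ι) :
    IdentDistrib (fun ω i ↦ X (σ i) ω) (fun ω i ↦ X i ω) P P := by
  have := hindep.isProbabilityMeasure
  have hX i : AEMeasurable (X i) P := (hid i i).aemeasurable_fst
  refine ⟨aemeasurable_pi_lambda _ fun i ↦ hX (σ i), aemeasurable_pi_lambda _ hX, ?_⟩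
  rw [(hindep.precomp σ.injective).map_fun_eq_pi_map fun i ↦ hX (σ i),
    hindep.map_fun_eq_pi_map hX]
  exact congrArg Measure.pi (funext fun i ↦ (hid (σ i) i).map_eq)

section Measurability

variable {ι α : Type*} [Fintype ι] [LinearOrder α] [MeasurableSpace α] [TopologicalSpace α]
  [OpensMeasurableSpace α] [SecondCountableTopology α] [OrderClosedTopology α]

lemma measurable_strictRank (j : ι) : Measurable fun x : ι → α ↦ strictRank x j := by
  simp_rw [strictRank, card_filter]
  exact measurable_sum _ fun i _ ↦ Measurable.ite
    (measurableSet_lt (measurable_pi_apply i) (measurable_pi_apply j)) measurable_const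
    measurable_const

lemma identDistrib_strictRank {Ω : Type*} [MeasurableSpace Ω] {P : Measure Ω} {X : ι → Ω → α}
    (hindep : iIndepFun X P) (hid : ∀ i j, IdentDistrib (X i) (X j) P P) (j j' : ι) :
    IdentDistrib (fun ω ↦ strictRank (X · ω) j) (fun ω ↦ strictRank (X · ω) j') P P := by
  classical
  have hswap : (fun ω ↦ strictRank (X · ω) j)
      = (fun x ↦ strictRank x j') ∘ fun ω i ↦ X (Equiv.swap j j' i) ω := by
    funext ω
    change strictRank (X · ω) j = strictRank ((X · ω) ∘ Equiv.swap j j') j'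
    rw [strictRank_comp_perm, Equiv.swap_apply_right]
  rw [hswap]
  exact (hindep.identDistrib_comp_perm hid _).comp (measurable_strictRank j')

end Measurability

theorem strict_rank_of_last_le_prob_ge_general
    {Ω : Type*} [MeasurableSpace Ω] (P : Measure Ω) [IsProbabilityMeasure P]
    (n : ℕ) (X : Fin (n + 1) → Ω → ℝ)
    (hindep : iIndepFun X P)
    (hid : ∀ i j, IdentDistrib (X i) (X j) P P)
    (k : ℕ) (hk1 : 1 ≤ k) (hk2 : k ≤ n + 1) :
    (k : ENNReal) / ((n : ENNReal) + 1) ≤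
      P {ω | (Finset.univ.filter
        (fun i : Fin (n + 1) => X i ω < X (Fin.last n) ω)).card ≤ k - 1} := by
  set A : Fin (n + 1) → Set Ω := fun j ↦ {ω | strictRank (X · ω) j < k}
  have hrank j : IdentDistrib (fun ω ↦ strictRank (X · ω) j)
      (fun ω ↦ strictRank (X · ω) (Fin.last n)) P P :=
    identDistrib_strictRank hindep hid j (Fin.last n)
  have hA j : NullMeasurableSet (A j) P :=
    (hrank j).aemeasurable_fst.nullMeasurableSet_preimage measurableSet_Iio
  have hPA j : P (A j) = P (A (Fin.last n)) := (hrank j).measure_mem_eq measurableSet_Iio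
  have hcover ω : k ≤ #{j | ω ∈ A j} :=
    le_card_filter_strictRank_lt (X · ω) (by simpa using hk2)
  have hsum := natCast_mul_measure_univ_le_sum_measure P hA hcover
  simp only [hPA, sum_const, card_univ, Fintype.card_fin, nsmul_eq_mul, measure_univ,
    mul_one] at hsum
  simp_rw [Nat.le_sub_one_iff_lt hk1]
  exact ENNReal.div_le_of_le_mul' (by exact_mod_cast hsum)

/-- tie-robust rank bound. If `X 0, …, X n` are i.i.d. real random
variables (ties allowed), then for every `k ∈ {1, …, n+1}`,
`P (#{i : X i < X (Fin.last n)} ≤ k - 1) ≥ k / (n + 1)`. -/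
theorem strict_rank_of_last_le_prob_ge
    {Ω : Type*} [MeasurableSpace Ω] (P : Measure Ω) [IsProbabilityMeasure P]
    (n : ℕ) (X : Fin (n + 1) → Ω → ℝ)
    (hmeas : ∀ i, Measurable (X i))
    (hindep : iIndepFun X P)
    (hid : ∀ i j, IdentDistrib (X i) (X j) P P)
    (k : ℕ) (hk1 : 1 ≤ k) (hk2 : k ≤ n + 1) :
    (k : ENNReal) / ((n : ENNReal) + 1) ≤
      P {ω | (Finset.univ.filter
        (fun i : Fin (n + 1) => X i ω < X (Fin.last n) ω)).card ≤ k - 1} :=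
  strict_rank_of_last_le_prob_ge_general P n X hindep hid k hk1 hk2
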